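/- Let n ≥ 4 be an even integer and q a nonzero complex number. The set of critical points of W_0 in Z^n is finite and has exactly n + 2 elements (n of them in V(I_1) and 2 of them in V(I_2)). -/

import Mathlib

open Finset

/-!
Write `P = z₁⋯z_n`, `A = q z₁² z_n`, and read `z₁` as `1` in the quadratic part, so that `z₂` is
the first summand of `∑ z_i z_{i+1}`. Cleared of `(P − 1)²`, the equation `∂W₀/∂z₁ = 0` becomes
`q z₁ z_n (P − 2) = 0`. If `z₁ z_n = 0` then `P = 0 = A`, the middle equations say
`z_{m−1} + z_{m+1} = 0` and the last one `z_{n−1} = q z₁²`: the odd coordinates alternate in sign,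
`q z₁² = ±1` forces `z₁ ≠ 0`, hence `z_n = 0` and all even coordinates vanish, which is `V(I₂)`.
Otherwise `P = 2`; multiplied by `z_m` the middle equations say `z_{m−1} z_m + z_m z_{m+1} = 2A`,
while `z_{n−1} z_n = A`, so every `z_m z_{m+1} = A` and the coordinates alternate between `A` and
`1`, which is `V(I₁)`. Conversely every point of `V(I₁)` and `V(I₂)` is critical. A point of
`V(I₁)` is determined by `z_n`, an `n`-th root of `4q`, and a point of `V(I₂)` by `z₁`, a square
root of `(−1)^{n/2−1}/q`.
-/

/-- One-based access to the coordinates of a point `z ∈ ℂⁿ`: `zc n z j = z_j` for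
`1 ≤ j ≤ n` (and `0` for out-of-range indices, which are never used). -/
noncomputable def zc (n : ℕ) (z : Fin n → ℂ) (j : ℕ) : ℂ :=
  if h : 1 ≤ j ∧ j ≤ n then z ⟨j - 1, by omega⟩ else 0

/-- The mirror Landau–Ginzburg potential of the quadric `Qⁿ`:
`W₀(z) = q z₁² z_n/(z₁⋯z_n − 1) + z₂ + ∑_{i=2}^{n−1} z_i z_{i+1}`,
defined on `Zⁿ = {z ∈ ℂⁿ : z₁⋯z_n ≠ 1}`. -/
noncomputable def W0 (n : ℕ) (q : ℂ) (z : Fin n → ℂ) : ℂ :=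
  q * (zc n z 1) ^ 2 * zc n z n / ((∏ j, z j) - 1)
    + zc n z 2 + ∑ i ∈ Finset.Icc 2 (n - 1), zc n z i * zc n z (i + 1)

/-- `z` is a critical point of `W₀` in `Zⁿ`: `z₁⋯z_n ≠ 1` and all `n` partial derivatives
`∂W₀/∂z_j` vanish at `z`. -/
def IsCritPt (n : ℕ) (q : ℂ) (z : Fin n → ℂ) : Prop :=
  (∏ j, z j) ≠ 1 ∧
    ∀ j : Fin n, deriv (fun t => W0 n q (Function.update z j t)) (z j) = 0

/-- Membership in `V(I₁)`: `z_{2i+1} = 1` for `1 ≤ i ≤ n/2−1`, `z_{2i} = z_n` for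
`1 ≤ i ≤ n/2`, `q z₁² = 1`, and `z₁ z_n^{n/2} = 2`. -/
def MemV1 (n : ℕ) (q : ℂ) (z : Fin n → ℂ) : Prop :=
  (∀ i : ℕ, 1 ≤ i → i ≤ n / 2 - 1 → zc n z (2 * i + 1) = 1) ∧
    (∀ i : ℕ, 1 ≤ i → i ≤ n / 2 → zc n z (2 * i) = zc n z n) ∧
    q * (zc n z 1) ^ 2 = 1 ∧ zc n z 1 * (zc n z n) ^ (n / 2) = 2

/-- Membership in `V(I₂)`: `z_{2i+1} = (−1)^i` for `1 ≤ i ≤ n/2−1`, `z_{2i} = 0` for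
`1 ≤ i ≤ n/2`, and `q z₁² = (−1)^{(n−2)/2}`. -/
def MemV2 (n : ℕ) (q : ℂ) (z : Fin n → ℂ) : Prop :=
  (∀ i : ℕ, 1 ≤ i → i ≤ n / 2 - 1 → zc n z (2 * i + 1) = (-1 : ℂ) ^ i) ∧
    (∀ i : ℕ, 1 ≤ i → i ≤ n / 2 → zc n z (2 * i) = 0) ∧
    q * (zc n z 1) ^ 2 = (-1 : ℂ) ^ ((n - 2) / 2)


lemma hasDerivAt_update_apply {ι 𝕜 : Type*} [NontriviallyNormedField 𝕜] [DecidableEq ι]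
    (x : ι → 𝕜) (m i : ι) (t : 𝕜) :
    HasDerivAt (fun s => Function.update x m s i) (if i = m then 1 else 0) t := by
  rcases eq_or_ne i m with rfl | h
  · simpa using hasDerivAt_id' t
  · simpa [Function.update_of_ne h, h] using hasDerivAt_const t (x i)

lemma sum_Icc_neighbours {R : Type*} [NonAssocSemiring R] (x : ℕ → R) (n : ℕ) {m : ℕ}
    (hm : 1 ≤ m) :
    ∑ i ∈ Icc 2 (n - 1), ((if i = m then 1 else 0) * x (i + 1) + x i * (if i + 1 = m then 1 else 0))
      = (if m ∈ Icc 2 (n - 1) then x (m + 1) else 0)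
        + (if m - 1 ∈ Icc 2 (n - 1) then x (m - 1) else 0) := by
  have hshift : ∀ i, (i + 1 = m) ↔ (m - 1 = i) := fun i => by omega
  simp only [sum_add_distrib, ite_mul, one_mul, zero_mul, mul_ite, mul_one, mul_zero, hshift]
  rw [sum_ite_eq', sum_ite_eq]

lemma eq_of_add_eq_two_mul {R : Type*} [CommRing R] {p : ℕ → R} {A : R} {N : ℕ}
    (hlast : p (N - 1) = A) (h : ∀ m ∈ Ioo 1 N, p (m - 1) + p m = 2 * A) :
    ∀ m ∈ Ico 1 N, p m = A := by
  have hdown : ∀ d, d + 2 ≤ N → p (N - 1 - d) = A := by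
    intro d
    induction d with
    | zero => exact fun _ => by simpa using hlast
    | succ d ih =>
      intro hd
      have h' := h (N - 1 - d) (by simp; omega)
      rw [show N - 1 - d - 1 = N - 1 - (d + 1) by omega, ih (by omega)] at h'
      linear_combination h'
  intro m hm
  obtain ⟨h1, h2⟩ := Finset.mem_Ico.mp hm
  simpa [show N - 1 - (N - 1 - m) = m by omega] using hdown (N - 1 - m) (by omega)

lemma eq_ite_of_mul_succ_eq {R : Type*} [CommRing R] [IsDomain R] {y : ℕ → R} {A : R} {N : ℕ}
    (hA : A ≠ 0) (h1 : y 1 = 1) (h : ∀ m ∈ Ico 1 N, y m * y (m + 1) = A) :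
    ∀ m ∈ Icc 1 N, y m = if m % 2 = 0 then A else 1 := by
  intro m hm
  obtain ⟨hm1, hmN⟩ := Finset.mem_Icc.mp hm
  induction m, hm1 using Nat.le_induction with
  | base => simpa using h1
  | succ m hm1 ih =>
    have hstep := h m (by simp; omega)
    rw [ih (by simp; omega) (by omega)] at hstep
    split_ifs at hstep ⊢
    · omega
    · simpa using hstep
    · exact mul_left_cancel₀ hA (by rw [hstep, mul_one])
    · omega

lemma eq_neg_one_pow_mul_of_add_eq_zero {R : Type*} [CommRing R] {y : ℕ → R} {N : ℕ}
    (h : ∀ m ∈ Ioo 1 N, y (m - 1) + y (m + 1) = 0) {a : ℕ} (ha : 1 ≤ a) :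
    ∀ i, a + 2 * i ≤ N → y (a + 2 * i) = (-1) ^ i * y a := by
  intro i
  induction i with
  | zero => simp
  | succ i ih =>
    intro hi
    have h' := h (a + 2 * i + 1) (by simp; omega)
    rw [Nat.add_sub_cancel, ih (by omega)] at h'
    rw [pow_succ, show a + 2 * (i + 1) = a + 2 * i + 1 + 1 by ring]
    linear_combination h'

lemma prod_Icc_eq_of_eq_ite {M : Type*} [CommMonoid M] {x : ℕ → M} {a : M} {k : ℕ}
    (hk : 1 ≤ k) (h : ∀ m ∈ Icc 2 (2 * k), x m = if m % 2 = 0 then a else 1) :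
    ∏ m ∈ Icc 1 (2 * k), x m = x 1 * a ^ k := by
  induction k, hk using Nat.le_induction with
  | base =>
    rw [show Icc 1 (2 * 1) = {1, 2} by rfl, prod_pair (by norm_num), h 2 (by simp)]
    simp
  | succ k hk ih =>
    rw [show 2 * (k + 1) = 2 * k + 1 + 1 by ring, prod_Icc_succ_top (by omega),
      prod_Icc_succ_top (by omega), ih (fun m hm => h m (by simp at hm ⊢; omega)),
      h (2 * k + 1) (by simp; omega), h (2 * k + 1 + 1) (by simp; omega),
      if_neg (by omega), if_pos (by omega), pow_succ]
    simp only [mul_one, mul_assoc]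

lemma prod_Icc_eq_zero_of_mul_eq_zero {M : Type*} [CommMonoidWithZero M] [NoZeroDivisors M]
    {x : ℕ → M} {n : ℕ} (hn : 1 ≤ n) (hx : x 1 * x n = 0) : ∏ i ∈ Icc 1 n, x i = 0 := by
  rcases mul_eq_zero.mp hx with h | h
  · exact prod_eq_zero (by simp; omega) h
  · exact prod_eq_zero (by simp; omega) h

lemma ncard_setOf_pow_eq {k : ℕ} (hk : k ≠ 0) {a : ℂ} (ha : a ≠ 0) :
    {x : ℂ | x ^ k = a}.ncard = k := by
  obtain ⟨ζ, hζ⟩ : ∃ ζ : ℂ, IsPrimitiveRoot ζ k := ⟨_, Complex.isPrimitiveRoot_exp k hk⟩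
  have hset : {x : ℂ | x ^ k = a} = ↑(Polynomial.nthRoots k a).toFinset := by
    ext x
    simp [Polynomial.mem_nthRoots (Nat.pos_of_ne_zero hk)]
  obtain ⟨b, hb⟩ := IsAlgClosed.exists_pow_nat_eq a (Nat.pos_of_ne_zero hk)
  rw [hset, Set.ncard_coe_finset, Multiset.toFinset_card_of_nodup (hζ.nthRoots_nodup ha),
    hζ.card_nthRoots, if_pos ⟨b, hb⟩]

lemma zc_succ (n : ℕ) (z : Fin n → ℂ) (j : Fin n) : zc n z (j + 1) = z j := by
  simp [zc]

lemma zc_apply {n : ℕ} (z : Fin n → ℂ) {m : ℕ} (hm : m ∈ Icc 1 n) :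
    zc n z m = z ⟨m - 1, by have := Finset.mem_Icc.mp hm; omega⟩ := by
  simp [zc, Finset.mem_Icc.mp hm]

lemma zc_update (n : ℕ) (z : Fin n → ℂ) (j : Fin n) (t : ℂ) :
    zc n (Function.update z j t) = Function.update (zc n z) (j + 1) t := by
  funext m
  unfold zc
  rcases eq_or_ne m (j + 1) with rfl | hm
  · simp
  · rw [Function.update_of_ne hm]
    split_ifs with h
    · exact Function.update_of_ne (fun h' => hm (by rw [Fin.ext_iff] at h'; simp at h'; omega)) _ _
    · rfl

lemma prod_eq_prod_Icc_zc (n : ℕ) (z : Fin n → ℂ) :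
    ∏ j, z j = ∏ m ∈ Icc 1 n, zc n z m := by
  rw [← Finset.Ico_add_one_right_eq_Icc, Finset.prod_Ico_eq_prod_range,
    ← Fin.prod_univ_eq_prod_range]
  simp [add_comm 1, zc_succ]

noncomputable def potential (n : ℕ) (q : ℂ) (x : ℕ → ℂ) : ℂ :=
  q * x 1 ^ 2 * x n / (∏ m ∈ Icc 1 n, x m - 1) + x 2 + ∑ i ∈ Icc 2 (n - 1), x i * x (i + 1)

lemma W0_eq_potential (n : ℕ) (q : ℂ) (z : Fin n → ℂ) :
    W0 n q z = potential n q (zc n z) := by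
  rw [W0, potential, prod_eq_prod_Icc_zc]

lemma hasDerivAt_potential_update (n : ℕ) (q : ℂ) (x : ℕ → ℂ) {m : ℕ} (hm : m ∈ Icc 1 n)
    (hP : ∏ i ∈ Icc 1 n, x i ≠ 1) :
    HasDerivAt (fun t => potential n q (Function.update x m t))
      ((q * (2 * x 1 * (if 1 = m then 1 else 0) * x n + x 1 ^ 2 * (if n = m then 1 else 0))
          * (∏ i ∈ Icc 1 n, x i - 1) - q * x 1 ^ 2 * x n * ∏ i ∈ (Icc 1 n).erase m, x i)
          / (∏ i ∈ Icc 1 n, x i - 1) ^ 2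
        + (if 2 = m then 1 else 0)
        + ∑ i ∈ Icc 2 (n - 1), ((if i = m then 1 else 0) * x (i + 1)
            + x i * (if i + 1 = m then 1 else 0))) (x m) := by
  have hprod : (fun t => ∏ i ∈ Icc 1 n, Function.update x m t i - 1)
      = fun t => t * ∏ i ∈ (Icc 1 n).erase m, x i - 1 := by
    funext t
    rw [Finset.prod_update_of_mem hm, Finset.sdiff_singleton_eq_erase]
  have hD : HasDerivAt (fun t => ∏ i ∈ Icc 1 n, Function.update x m t i - 1)
      (∏ i ∈ (Icc 1 n).erase m, x i) (x m) := by
    rw [hprod]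
    simpa using ((hasDerivAt_id (x m)).mul_const _).sub_const 1
  have hD0 : ∏ i ∈ Icc 1 n, Function.update x m (x m) i - 1 ≠ 0 := by
    simpa [sub_eq_zero] using hP
  have hu := hasDerivAt_update_apply x m
  have h := ((((hu 1 (x m)).pow 2).const_mul q).mul (hu n (x m))).div hD hD0 |>.add (hu 2 (x m))
    |>.add (HasDerivAt.sum (u := Icc 2 (n - 1)) fun i _ => (hu i (x m)).mul (hu (i + 1) (x m)))
  refine (h.congr_deriv ?_).congr_of_eventuallyEq (.of_forall fun t => ?_)
  · simp only [Function.update_eq_self, Pi.mul_apply, Pi.pow_apply, Nat.cast_ofNat]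
    ring
  · simp [potential]

lemma isCritPt_iff_deriv_potential (n : ℕ) (q : ℂ) (z : Fin n → ℂ) :
    IsCritPt n q z ↔ ∏ m ∈ Icc 1 n, zc n z m ≠ 1 ∧
      ∀ m ∈ Icc 1 n, deriv (fun t => potential n q (Function.update (zc n z) m t)) (zc n z m) = 0 := by
  simp only [IsCritPt, W0_eq_potential, zc_update, prod_eq_prod_Icc_zc]
  refine and_congr_right fun _ => ⟨fun h m hm => ?_, fun h j => ?_⟩
  · obtain ⟨h1, h2⟩ := Finset.mem_Icc.mp hm
    simpa [← zc_succ, Nat.sub_add_cancel h1] using h ⟨m - 1, by omega⟩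
  · simpa [zc_succ] using h (j + 1) (by simp)

/-- The equations `∂W₀/∂z_m = 0` in the coordinates `x = zc n z`, with the denominator
`(z₁⋯z_n − 1)²` cleared; in `middle`, `Function.update x 1 1` reads `z₁` as `1`. -/
structure CritEqns (n : ℕ) (q : ℂ) (x : ℕ → ℂ) : Prop where
  prod_ne_one : ∏ i ∈ Icc 1 n, x i ≠ 1
  first : q * x 1 * x n * (∏ i ∈ Icc 1 n, x i - 2) = 0
  middle : ∀ m ∈ Ioo 1 n, (Function.update x 1 1 (m - 1) + Function.update x 1 1 (m + 1))
      * (∏ i ∈ Icc 1 n, x i - 1) ^ 2 = q * x 1 ^ 2 * x n * ∏ i ∈ (Icc 1 n).erase m, x i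
  last : x (n - 1) * (∏ i ∈ Icc 1 n, x i - 1) ^ 2 = q * x 1 ^ 2

section Derivatives

variable {n : ℕ} {q : ℂ} {x : ℕ → ℂ}

lemma deriv_potential_update_first_eq_zero_iff (hn : 3 ≤ n) (hP : ∏ i ∈ Icc 1 n, x i ≠ 1) :
    deriv (fun t => potential n q (Function.update x 1 t)) (x 1) = 0 ↔
      q * x 1 * x n * (∏ i ∈ Icc 1 n, x i - 2) = 0 := by
  have hD : (∏ i ∈ Icc 1 n, x i - 1) ^ 2 ≠ 0 := pow_ne_zero 2 (sub_ne_zero.mpr hP)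
  have hQ := Finset.mul_prod_erase (Icc 1 n) x (a := 1) (by simp; omega)
  rw [(hasDerivAt_potential_update n q x (by simp; omega) hP).deriv,
    sum_Icc_neighbours x n le_rfl, if_pos rfl, if_neg (by omega), if_neg (by omega),
    if_neg (by simp), if_neg (by simp), add_zero, add_zero, add_zero, div_eq_zero_iff,
    or_iff_left hD]
  constructor <;> intro h
  · linear_combination h + q * x 1 * x n * hQ
  · linear_combination h - q * x 1 * x n * hQ

lemma deriv_potential_update_middle_eq_zero_iff {m : ℕ} (hm : m ∈ Ioo 1 n)
    (hP : ∏ i ∈ Icc 1 n, x i ≠ 1) :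
    deriv (fun t => potential n q (Function.update x m t)) (x m) = 0 ↔
      (Function.update x 1 1 (m - 1) + Function.update x 1 1 (m + 1))
        * (∏ i ∈ Icc 1 n, x i - 1) ^ 2 = q * x 1 ^ 2 * x n * ∏ i ∈ (Icc 1 n).erase m, x i := by
  obtain ⟨h1, h2⟩ := Finset.mem_Ioo.mp hm
  have hD : (∏ i ∈ Icc 1 n, x i - 1) ^ 2 ≠ 0 := pow_ne_zero 2 (sub_ne_zero.mpr hP)
  rw [(hasDerivAt_potential_update n q x (Finset.mem_Icc.mpr ⟨h1.le, h2.le⟩) hP).deriv,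
    sum_Icc_neighbours x n h1.le, if_neg (by omega), if_neg (by omega),
    if_pos (by simp; omega : m ∈ Icc 2 (n - 1)), Function.update_of_ne (by omega : m + 1 ≠ 1)]
  have hnbr : (if 2 = m then (1 : ℂ) else 0) + (if m - 1 ∈ Icc 2 (n - 1) then x (m - 1) else 0)
      = Function.update x 1 1 (m - 1) := by
    rcases eq_or_ne m 2 with rfl | hm2
    · simp
    · rw [if_neg hm2.symm, if_pos (by simp; omega), Function.update_of_ne (by omega), zero_add]
  field_simp
  constructor <;> intro h
  · linear_combination h - (∏ i ∈ Icc 1 n, x i - 1) ^ 2 * hnbr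
  · linear_combination h + (∏ i ∈ Icc 1 n, x i - 1) ^ 2 * hnbr

lemma deriv_potential_update_last_eq_zero_iff (hn : 3 ≤ n) (hP : ∏ i ∈ Icc 1 n, x i ≠ 1) :
    deriv (fun t => potential n q (Function.update x n t)) (x n) = 0 ↔
      x (n - 1) * (∏ i ∈ Icc 1 n, x i - 1) ^ 2 = q * x 1 ^ 2 := by
  have hD : (∏ i ∈ Icc 1 n, x i - 1) ^ 2 ≠ 0 := pow_ne_zero 2 (sub_ne_zero.mpr hP)
  have hQ := Finset.mul_prod_erase (Icc 1 n) x (a := n) (by simp; omega)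
  rw [(hasDerivAt_potential_update n q x (by simp; omega) hP).deriv,
    sum_Icc_neighbours x n (by omega), if_pos rfl, if_neg (by omega), if_neg (by omega),
    if_neg (by simp; omega), if_pos (by simp; omega)]
  field_simp
  constructor <;> intro h
  · linear_combination h + q * x 1 ^ 2 * hQ
  · linear_combination h - q * x 1 ^ 2 * hQ

end Derivatives

lemma isCritPt_iff_critEqns {n : ℕ} (hn : 3 ≤ n) (q : ℂ) (z : Fin n → ℂ) :
    IsCritPt n q z ↔ CritEqns n q (zc n z) := by
  rw [isCritPt_iff_deriv_potential]
  constructor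
  · rintro ⟨hP, h⟩
    exact ⟨hP, (deriv_potential_update_first_eq_zero_iff hn hP).mp (h 1 (by simp; omega)),
      fun m hm => (deriv_potential_update_middle_eq_zero_iff hm hP).mp
        (h m (Finset.Ioo_subset_Icc_self hm)),
      (deriv_potential_update_last_eq_zero_iff hn hP).mp (h n (by simp; omega))⟩
  · intro hE
    refine ⟨hE.prod_ne_one, fun m hm => ?_⟩
    obtain ⟨h1, h2⟩ := Finset.mem_Icc.mp hm
    rcases h1.eq_or_lt with rfl | h1
    · exact (deriv_potential_update_first_eq_zero_iff hn hE.prod_ne_one).mpr hE.first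
    rcases h2.eq_or_lt with rfl | h2
    · exact (deriv_potential_update_last_eq_zero_iff hn hE.prod_ne_one).mpr hE.last
    exact (deriv_potential_update_middle_eq_zero_iff (by simp [h1, h2]) hE.prod_ne_one).mpr
      (hE.middle m (by simp [h1, h2]))

section Shape

variable {n : ℕ} {q : ℂ} {z : Fin n → ℂ}

lemma memV1_iff (hev : Even n) :
    MemV1 n q z ↔ (∀ m ∈ Icc 2 n, zc n z m = if m % 2 = 0 then zc n z n else 1) ∧
      q * zc n z 1 ^ 2 = 1 ∧ zc n z 1 * zc n z n ^ (n / 2) = 2 := by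
  have hpar := Nat.even_iff.mp hev
  rw [MemV1, ← and_assoc]
  refine and_congr_left' ⟨fun ⟨hodd, heven⟩ m hm => ?_,
    fun h => ⟨fun i h1 hi => ?_, fun i h1 hi => ?_⟩⟩
  · obtain ⟨h2, hmn⟩ := Finset.mem_Icc.mp hm
    split_ifs with hm2
    · simpa [Nat.mul_div_cancel' (Nat.dvd_of_mod_eq_zero hm2)]
        using heven (m / 2) (by omega) (by omega)
    · simpa [show 2 * (m / 2) + 1 = m by omega] using hodd (m / 2) (by omega) (by omega)
  · simpa [show (2 * i + 1) % 2 ≠ 0 by omega] using h (2 * i + 1) (by simp; omega)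
  · simpa using h (2 * i) (by simp; omega)

lemma memV2_iff (hev : Even n) :
    MemV2 n q z ↔ (∀ m ∈ Icc 2 n, zc n z m = if m % 2 = 0 then 0 else (-1) ^ (m / 2)) ∧
      q * zc n z 1 ^ 2 = (-1) ^ (n / 2 - 1) := by
  have hpar := Nat.even_iff.mp hev
  rw [MemV2, show (n - 2) / 2 = n / 2 - 1 by omega, ← and_assoc]
  refine and_congr_left' ⟨fun ⟨hodd, heven⟩ m hm => ?_,
    fun h => ⟨fun i h1 hi => ?_, fun i h1 hi => ?_⟩⟩
  · obtain ⟨h2, hmn⟩ := Finset.mem_Icc.mp hm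
    split_ifs with hm2
    · simpa [Nat.mul_div_cancel' (Nat.dvd_of_mod_eq_zero hm2)]
        using heven (m / 2) (by omega) (by omega)
    · simpa [show 2 * (m / 2) + 1 = m by omega] using hodd (m / 2) (by omega) (by omega)
  · simpa [show (2 * i + 1) % 2 ≠ 0 by omega, show (2 * i + 1) / 2 = i by omega]
      using h (2 * i + 1) (by simp; omega)
  · simpa using h (2 * i) (by simp; omega)

end Shape

namespace CritEqns

variable {n : ℕ} {q : ℂ} {x : ℕ → ℂ}

lemma prod_eq_two (hE : CritEqns n q x) (hq : q ≠ 0) (hx : x 1 * x n ≠ 0) :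
    ∏ i ∈ Icc 1 n, x i = 2 := by
  have h := hE.first
  rw [mul_assoc q, mul_assoc q] at h
  exact sub_eq_zero.mp ((mul_eq_zero.mp ((mul_eq_zero.mp h).resolve_left hq)).resolve_left hx)

lemma mul_succ_eq (hE : CritEqns n q x) (hn : 3 ≤ n) (hP : ∏ i ∈ Icc 1 n, x i = 2) :
    ∀ m ∈ Ico 1 n, Function.update x 1 1 m * Function.update x 1 1 (m + 1)
      = q * x 1 ^ 2 * x n := by
  set y := Function.update x 1 1
  have hy : ∀ m, m ≠ 1 → y m = x m := fun m hm => Function.update_of_ne hm _ _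
  refine eq_of_add_eq_two_mul (p := fun m => y m * y (m + 1)) ?_ fun m hm => ?_
  · have h := hE.last
    rw [hP] at h
    simp only [Nat.sub_add_cancel (by omega : 1 ≤ n), hy _ (by omega : n - 1 ≠ 1),
      hy _ (by omega : n ≠ 1)]
    linear_combination x n * h
  · obtain ⟨h1, h2⟩ := Finset.mem_Ioo.mp hm
    have h := hE.middle m hm
    have hQ := Finset.mul_prod_erase (Icc 1 n) x (a := m) (by simp; omega)
    rw [hP] at h hQ
    simp only [Nat.sub_add_cancel h1.le, hy m (by omega)]
    linear_combination x m * h + q * x 1 ^ 2 * x n * hQ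

lemma memV1 {z : Fin n → ℂ} (hE : CritEqns n q (zc n z)) (hn : 4 ≤ n) (hev : Even n)
    (hq : q ≠ 0) (hx : zc n z 1 * zc n z n ≠ 0) : MemV1 n q z := by
  rw [memV1_iff hev]
  set x := zc n z
  set A := q * x 1 ^ 2 * x n with hAdef
  have hA : A ≠ 0 := by
    obtain ⟨h1, hn'⟩ := mul_ne_zero_iff.mp hx
    exact mul_ne_zero (mul_ne_zero hq (pow_ne_zero 2 h1)) hn'
  have hP := hE.prod_eq_two hq hx
  have hval := eq_ite_of_mul_succ_eq hA (Function.update_self 1 1 x) (hE.mul_succ_eq (by omega) hP)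
  have hval' : ∀ m ∈ Icc 2 n, x m = if m % 2 = 0 then A else 1 := fun m hm => by
    simp only [Finset.mem_Icc] at hm
    rw [← hval m (by simp; omega), Function.update_of_ne (by omega)]
  have hxn : x n = A := by simpa [Nat.even_iff.mp hev] using hval' n (by simp; omega)
  have hqx : (q * x 1 ^ 2 - 1) * A = 0 := by linear_combination (-q * x 1 ^ 2) * hxn - hAdef
  have hprod := prod_Icc_eq_of_eq_ite (x := x) (k := n / 2) (by omega)
    (by rwa [Nat.two_mul_div_two_of_even hev])
  rw [Nat.two_mul_div_two_of_even hev, hP] at hprod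
  rw [hxn]
  exact ⟨hval', sub_eq_zero.mp ((mul_eq_zero.mp hqx).resolve_right hA), hprod.symm⟩

lemma update_add_update_eq_zero (hE : CritEqns n q x) (hx : x 1 * x n = 0) :
    ∀ m ∈ Ioo 1 n, Function.update x 1 1 (m - 1) + Function.update x 1 1 (m + 1) = 0 := by
  intro m hm
  have h := hE.middle m hm
  rw [prod_Icc_eq_zero_of_mul_eq_zero (by simp at hm; omega) hx] at h
  linear_combination h + q * x 1 * (∏ i ∈ (Icc 1 n).erase m, x i) * hx

lemma memV2 {z : Fin n → ℂ} (hE : CritEqns n q (zc n z)) (hn : 4 ≤ n) (hev : Even n)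
    (hx : zc n z 1 * zc n z n = 0) : MemV2 n q z := by
  have hpar := Nat.even_iff.mp hev
  rw [memV2_iff hev]
  set x := zc n z
  have hy : ∀ m, m ≠ 1 → Function.update x 1 1 m = x m := fun m hm => Function.update_of_ne hm _ _
  have hodd := eq_neg_one_pow_mul_of_add_eq_zero (hE.update_add_update_eq_zero hx) le_rfl
  have heven := eq_neg_one_pow_mul_of_add_eq_zero (hE.update_add_update_eq_zero hx) one_le_two
  have hqx : q * x 1 ^ 2 = (-1) ^ (n / 2 - 1) := by
    have h := hE.last
    rw [prod_Icc_eq_zero_of_mul_eq_zero (by omega) hx, ← hy (n - 1) (by omega),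
      show n - 1 = 1 + 2 * (n / 2 - 1) by omega, hodd _ (by omega)] at h
    simpa using h.symm
  have hxn : x n = 0 := by
    refine (mul_eq_zero.mp hx).resolve_left fun h1 => ?_
    rw [h1, zero_pow two_ne_zero, mul_zero] at hqx
    exact pow_ne_zero _ (by norm_num) hqx.symm
  have hx2 : x 2 = 0 := by
    have h := heven (n / 2 - 1) (by omega)
    rw [show 2 + 2 * (n / 2 - 1) = n by omega, hy n (by omega), hy 2 (by omega), hxn] at h
    simpa using h.symm
  refine ⟨fun m hm => ?_, hqx⟩
  simp only [Finset.mem_Icc] at hm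
  rw [← hy m (by omega)]
  split_ifs with hm2
  · rw [show m = 2 + 2 * (m / 2 - 1) by omega, heven _ (by omega), hy 2 (by omega), hx2, mul_zero]
  · have h := hodd (m / 2) (by omega)
    rw [show 1 + 2 * (m / 2) = m by omega] at h
    simpa using h

end CritEqns

section Converse

variable {n : ℕ} {q : ℂ} {z : Fin n → ℂ}

lemma critEqns_of_memV1 (hn : 4 ≤ n) (hev : Even n) (h : MemV1 n q z) :
    CritEqns n q (zc n z) := by
  have hpar := Nat.even_iff.mp hev
  rw [memV1_iff hev] at h
  obtain ⟨hval, hq1, hprod⟩ := h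
  set x := zc n z
  have hxn : x n ≠ 0 := fun h0 => by simp [h0, show n / 2 ≠ 0 by omega] at hprod
  have hP : ∏ i ∈ Icc 1 n, x i = 2 := by
    rw [← hprod, ← prod_Icc_eq_of_eq_ite (by omega) (by rwa [Nat.two_mul_div_two_of_even hev]),
      Nat.two_mul_div_two_of_even hev]
  have hy : ∀ m ∈ Icc 1 n, Function.update x 1 1 m = if m % 2 = 0 then x n else 1 := by
    intro m hm
    rcases eq_or_ne m 1 with rfl | hm1
    · simp
    · rw [Function.update_of_ne hm1, hval m (by simp at hm ⊢; omega)]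
  refine ⟨by rw [hP]; norm_num, by rw [hP]; ring, fun m hm => ?_, ?_⟩
  · obtain ⟨h1, h2⟩ := Finset.mem_Ioo.mp hm
    have hxm := hval m (by simp; omega)
    have hQ := Finset.mul_prod_erase (Icc 1 n) x (a := m) (by simp; omega)
    rw [hP] at hQ
    refine mul_left_cancel₀ (left_ne_zero_of_mul (hQ ▸ two_ne_zero)) ?_
    rw [hy _ (by simp; omega), hy _ (by simp; omega), hP]
    by_cases hm2 : m % 2 = 0
    · rw [if_pos hm2] at hxm
      rw [if_neg (by omega), if_neg (by omega)]
      linear_combination 2 * hxm - 2 * x n * hq1 - q * x 1 ^ 2 * x n * hQ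
    · rw [if_neg hm2] at hxm
      rw [if_pos (by omega), if_pos (by omega)]
      linear_combination 2 * x n * hxm - 2 * x n * hq1 - q * x 1 ^ 2 * x n * hQ
  · rw [hP, hval _ (by simp; omega), if_neg (by omega)]
    linear_combination -hq1

lemma critEqns_of_memV2 (hn : 4 ≤ n) (hev : Even n) (h : MemV2 n q z) :
    CritEqns n q (zc n z) := by
  have hpar := Nat.even_iff.mp hev
  rw [memV2_iff hev] at h
  obtain ⟨hval, hq1⟩ := h
  set x := zc n z
  have hxn : x n = 0 := by simpa [hpar] using hval n (by simp; omega)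
  have hP : ∏ i ∈ Icc 1 n, x i = 0 :=
    prod_eq_zero (i := 2) (by simp; omega) (by simpa using hval 2 (by simp; omega))
  have hy : ∀ m ∈ Icc 1 n,
      Function.update x 1 1 m = if m % 2 = 0 then 0 else (-1) ^ (m / 2) := by
    intro m hm
    rcases eq_or_ne m 1 with rfl | hm1
    · simp
    · rw [Function.update_of_ne hm1, hval m (by simp at hm ⊢; omega)]
  refine ⟨by rw [hP]; norm_num, by rw [hxn]; ring, fun m hm => ?_, ?_⟩
  · obtain ⟨h1, h2⟩ := Finset.mem_Ioo.mp hm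
    rw [hy _ (by simp; omega), hy _ (by simp; omega), hxn]
    by_cases hm2 : m % 2 = 0
    · rw [if_neg (by omega), if_neg (by omega), show (m + 1) / 2 = (m - 1) / 2 + 1 by omega]
      ring
    · rw [if_pos (by omega), if_pos (by omega)]
      ring
  · rw [hP, hval _ (by simp; omega), if_neg (by omega), hq1,
      show (n - 1) / 2 = n / 2 - 1 by omega]
    ring

end Converse

lemma isCritPt_iff_memV1_or_memV2 {n : ℕ} (hn : 4 ≤ n) (hev : Even n) {q : ℂ} (hq : q ≠ 0)
    (z : Fin n → ℂ) : IsCritPt n q z ↔ MemV1 n q z ∨ MemV2 n q z := by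
  rw [isCritPt_iff_critEqns (by omega)]
  refine ⟨fun hE => ?_, fun h => h.elim (critEqns_of_memV1 hn hev) (critEqns_of_memV2 hn hev)⟩
  by_cases hx : zc n z 1 * zc n z n = 0
  · exact Or.inr (hE.memV2 hn hev hx)
  · exact Or.inl (hE.memV1 hn hev hq hx)

-- Zero-based: `j = 0` is the coordinate `z₁`, and `j` even means `z_{j+1}` has odd index.
noncomputable def pointV1 (n : ℕ) (ζ : ℂ) : Fin n → ℂ :=
  fun j => if j.val = 0 then 2 / ζ ^ (n / 2) else if j.val % 2 = 0 then 1 else ζ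

noncomputable def pointV2 (n : ℕ) (ε : ℂ) : Fin n → ℂ :=
  fun j => if j.val = 0 then ε else if j.val % 2 = 0 then (-1) ^ (j.val / 2) else 0

section Count

variable {n : ℕ} {q : ℂ}

lemma memV1_pointV1 (hn : 2 ≤ n) (hev : Even n) (hq : q ≠ 0) {ζ : ℂ} (hζ : ζ ^ n = 4 * q) :
    MemV1 n q (pointV1 n ζ) := by
  have hpar := Nat.even_iff.mp hev
  have hpow : ζ ^ n = (ζ ^ (n / 2)) ^ 2 := by rw [← pow_mul, Nat.div_mul_cancel hev.two_dvd]
  have hk : ζ ^ (n / 2) ≠ 0 := fun h0 => by simp [hpow, h0, hq] at hζ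
  have hz1 : zc n (pointV1 n ζ) 1 = 2 / ζ ^ (n / 2) := by
    rw [zc_apply _ (by simp; omega)]
    simp [pointV1]
  have hzn : zc n (pointV1 n ζ) n = ζ := by
    rw [zc_apply _ (by simp; omega)]
    simp [pointV1, show n - 1 ≠ 0 by omega, show (n - 1) % 2 ≠ 0 by omega]
  rw [memV1_iff hev, hz1, hzn, div_mul_cancel₀ _ hk, div_pow, ← hpow, hζ]
  refine ⟨fun m hm => ?_, by field_simp; norm_num, rfl⟩
  simp only [Finset.mem_Icc] at hm
  rw [zc_apply _ (by simp; omega)]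
  simp only [pointV1, if_neg (show m - 1 ≠ 0 by omega)]
  by_cases hm2 : m % 2 = 0
  · rw [if_pos hm2, if_neg (by omega)]
  · rw [if_neg hm2, if_pos (by omega)]

lemma pointV1_eq_of_memV1 (hev : Even n) {z : Fin n → ℂ} (h : MemV1 n q z) :
    zc n z n ^ n = 4 * q ∧ pointV1 n (zc n z n) = z := by
  have hpar := Nat.even_iff.mp hev
  rw [memV1_iff hev] at h
  obtain ⟨hval, hq1, hprod⟩ := h
  have hk : zc n z n ^ (n / 2) ≠ 0 := right_ne_zero_of_mul (hprod ▸ two_ne_zero)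
  have hpow : zc n z n ^ n = (zc n z n ^ (n / 2)) ^ 2 := by
    rw [← pow_mul, Nat.div_mul_cancel hev.two_dvd]
  refine ⟨by linear_combination hpow - (zc n z n ^ (n / 2)) ^ 2 * hq1
    + q * (zc n z 1 * zc n z n ^ (n / 2) + 2) * hprod, funext fun j => ?_⟩
  rw [pointV1, ← zc_succ n z j]
  split_ifs with h0 hj
  · rw [h0, zero_add, eq_comm, eq_div_iff hk, hprod]
  · rw [hval (j + 1) (by simp; omega), if_neg (by omega)]
  · rw [hval (j + 1) (by simp; omega), if_pos (by omega)]

lemma setOf_memV1_eq_image (hn : 2 ≤ n) (hev : Even n) (hq : q ≠ 0) :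
    {z | MemV1 n q z} = pointV1 n '' {ζ | ζ ^ n = 4 * q} := by
  ext z
  refine ⟨fun h => ⟨_, pointV1_eq_of_memV1 hev h⟩, ?_⟩
  rintro ⟨ζ, hζ, rfl⟩
  exact memV1_pointV1 hn hev hq hζ

lemma memV2_pointV2 (hn : 2 ≤ n) (hev : Even n) {ε : ℂ} (hε : q * ε ^ 2 = (-1) ^ (n / 2 - 1)) :
    MemV2 n q (pointV2 n ε) := by
  rw [memV2_iff hev]
  refine ⟨fun m hm => ?_, by simpa [zc_apply _ (show 1 ∈ Icc 1 n by simp; omega), pointV2]⟩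
  simp only [Finset.mem_Icc] at hm
  rw [zc_apply _ (by simp; omega)]
  simp only [pointV2, if_neg (show m - 1 ≠ 0 by omega)]
  by_cases hm2 : m % 2 = 0
  · rw [if_pos hm2, if_neg (by omega)]
  · rw [if_neg hm2, if_pos (by omega), show (m - 1) / 2 = m / 2 by omega]

lemma pointV2_eq_of_memV2 (hev : Even n) {z : Fin n → ℂ} (h : MemV2 n q z) :
    q * zc n z 1 ^ 2 = (-1) ^ (n / 2 - 1) ∧ pointV2 n (zc n z 1) = z := by
  rw [memV2_iff hev] at h
  obtain ⟨hval, hq1⟩ := h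
  refine ⟨hq1, funext fun j => ?_⟩
  rw [pointV2, ← zc_succ n z j]
  split_ifs with h0 hj
  · rw [h0]
  · rw [hval (j + 1) (by simp; omega), if_neg (by omega),
      show (j.val + 1) / 2 = j.val / 2 by omega]
  · rw [hval (j + 1) (by simp; omega), if_pos (by omega)]

lemma setOf_memV2_eq_image (hn : 2 ≤ n) (hev : Even n) :
    {z | MemV2 n q z} = pointV2 n '' {ε | q * ε ^ 2 = (-1) ^ (n / 2 - 1)} := by
  ext z
  refine ⟨fun h => ⟨_, pointV2_eq_of_memV2 hev h⟩, ?_⟩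
  rintro ⟨ε, hε, rfl⟩
  exact memV2_pointV2 hn hev hε

lemma ncard_setOf_memV1 (hn : 2 ≤ n) (hev : Even n) (hq : q ≠ 0) :
    {z | MemV1 n q z}.ncard = n := by
  have hpar := Nat.even_iff.mp hev
  have hinj : Set.InjOn (pointV1 n) {ζ | ζ ^ n = 4 * q} := fun ζ _ ζ' _ h => by
    simpa [pointV1, show n - 1 ≠ 0 by omega, show (n - 1) % 2 ≠ 0 by omega]
      using congrFun h ⟨n - 1, by omega⟩
  rw [setOf_memV1_eq_image hn hev hq, hinj.ncard_image,
    ncard_setOf_pow_eq (by omega) (mul_ne_zero (by norm_num) hq)]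

lemma ncard_setOf_memV2 (hn : 2 ≤ n) (hev : Even n) (hq : q ≠ 0) :
    {z | MemV2 n q z}.ncard = 2 := by
  have hinj : Set.InjOn (pointV2 n) {ε | q * ε ^ 2 = (-1) ^ (n / 2 - 1)} := fun ε _ ε' _ h => by
    simpa [pointV2] using congrFun h ⟨0, by omega⟩
  have hroots : {ε : ℂ | q * ε ^ 2 = (-1) ^ (n / 2 - 1)}
      = {ε | ε ^ 2 = (-1) ^ (n / 2 - 1) / q} := by
    ext ε
    rw [Set.mem_ofPred_eq, Set.mem_ofPred_eq, eq_div_iff hq, mul_comm]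
  rw [setOf_memV2_eq_image hn hev, hinj.ncard_image, hroots,
    ncard_setOf_pow_eq two_ne_zero (div_ne_zero (pow_ne_zero _ (by norm_num)) hq)]

lemma disjoint_setOf_memV1_memV2 (hn : 2 ≤ n) (hev : Even n) :
    Disjoint {z | MemV1 n q z} {z | MemV2 n q z} := by
  refine Set.disjoint_left.mpr fun z h1 h2 => ?_
  have hzn := h2.2.1 (n / 2) (by omega) le_rfl
  rw [Nat.two_mul_div_two_of_even hev] at hzn
  have h := h1.2.2.2
  rw [hzn, zero_pow (by omega), mul_zero] at h
  exact two_ne_zero h.symm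

end Count

/-- **Count of critical points of the mirror LG potential of the quadric.**
For even `n ≥ 4` and `q ≠ 0`, the set of critical points of `W₀` in `Zⁿ` is finite with
exactly `n + 2` elements: `n` of them in `V(I₁)` and `2` of them in `V(I₂)`. -/
theorem quadric_mirror_critical_count (n : ℕ) (hn : 4 ≤ n) (hev : Even n)
    (q : ℂ) (hq : q ≠ 0) :
    {z : Fin n → ℂ | IsCritPt n q z}.Finite ∧
    {z : Fin n → ℂ | IsCritPt n q z}.ncard = n + 2 ∧
    {z : Fin n → ℂ | IsCritPt n q z ∧ MemV1 n q z}.ncard = n ∧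
    {z : Fin n → ℂ | IsCritPt n q z ∧ MemV2 n q z}.ncard = 2 := by
  have hcrit := isCritPt_iff_memV1_or_memV2 hn hev hq
  have hV1 := ncard_setOf_memV1 (by omega) hev hq
  have hV2 := ncard_setOf_memV2 (by omega) hev hq
  have hfin1 := Set.finite_of_ncard_ne_zero (by rw [hV1]; omega)
  have hfin2 := Set.finite_of_ncard_ne_zero (by rw [hV2]; omega)
  have hunion : {z | IsCritPt n q z} = {z | MemV1 n q z} ∪ {z | MemV2 n q z} := Set.ext hcrit
  have hcrit1 : {z | IsCritPt n q z ∧ MemV1 n q z} = {z | MemV1 n q z} :=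
    Set.ext fun z => and_iff_right_of_imp fun h => (hcrit z).mpr (Or.inl h)
  have hcrit2 : {z | IsCritPt n q z ∧ MemV2 n q z} = {z | MemV2 n q z} :=
    Set.ext fun z => and_iff_right_of_imp fun h => (hcrit z).mpr (Or.inr h)
  refine ⟨hunion ▸ hfin1.union hfin2, ?_, hcrit1 ▸ hV1, hcrit2 ▸ hV2⟩
  rw [hunion, Set.ncard_union_eq (disjoint_setOf_memV1_memV2 (by omega) hev) hfin1 hfin2, hV1, hV2]
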